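/- Let S = (X_0,…,X_{d−1}) be a d-symbol with balanced quotient Q = Q(S) and core C = C(S). Let i ≠ j in {0,…,d−1} with Δ = |X_i| − |X_j| > 0. Then for all ℓ with 0 < ℓ < Δ: |H_{ij}^ℓ(S)| = |H_{ji}^{Δ−ℓ}(Q)| + |H_{ij}^ℓ(C)|. -/

import Mathlib

/-- `X^{+s} = (X + s) ∪ {0,…,s−1}` for a β-set `X`. -/
def shiftUp (X : Finset ℕ) (s : ℕ) : Finset ℕ :=
  X.image (· + s) ∪ Finset.range s

/-- The `d`-symbol `s_d(X)` associated to a β-set `X`: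
`X_i^{(d)} = {k ∈ ℕ : i + k*d ∈ X}`. -/
def sd (d : ℕ) (X : Finset ℕ) : Fin d → Finset ℕ :=
  fun i => (X.filter fun a => a % d = (i : ℕ)).image fun a => a / d

/-- The inverse of `s_d`, recovering the β-set of a `d`-symbol. -/
def sdInv (d : ℕ) (S : Fin d → Finset ℕ) : Finset ℕ :=
  Finset.univ.biUnion fun i => (S i).image fun k => (i : ℕ) + k * d

/-- Hooks of a β-set `X`: pairs `(a,b)` with `a > b`, `a ∈ X`, `b ∉ X`. -/
def betaHooks (X : Finset ℕ) : Finset (ℕ × ℕ) :=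
  (X ×ˢ Finset.range (X.sup id + 1)).filter fun p => p.2 < p.1 ∧ p.2 ∉ X

/-- Hooks of a `d`-symbol `S`: quadruples `(a,b,i,j)` with `a ∈ S i`, `b ∉ S j`,
and either `a > b`, or `a = b` and `i > j`. -/
def symbolHooks {d : ℕ} (S : Fin d → Finset ℕ) : Finset (ℕ × ℕ × Fin d × Fin d) :=
  (Finset.range ((Finset.univ.sup fun i => (S i).sup id) + 1) ×ˢ
      Finset.range ((Finset.univ.sup fun i => (S i).sup id) + 1) ×ˢ
      (Finset.univ : Finset (Fin d)) ×ˢ (Finset.univ : Finset (Fin d))).filter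
    fun z => z.1 ∈ S z.2.2.1 ∧ z.2.1 ∉ S z.2.2.2 ∧
      (z.2.1 < z.1 ∨ (z.1 = z.2.1 ∧ z.2.2.2 < z.2.2.1))

/-- The partition `p(X)` of a β-set `X = {a_1 > … > a_t}`, as the multiset of the
nonzero numbers among `a_i − (t−i)`; the element `a` contributes the part
`a − #{b ∈ X : b < a}`. -/
def partitionOf (X : Finset ℕ) : Multiset ℕ :=
  Multiset.filter (· ≠ 0) (X.val.map fun a => a - (X.filter (· < a)).card)

/-- `r`, the maximal number of parts among the partitions `p(X_i)` of a `d`-symbol. -/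
def quotCard {d : ℕ} (S : Fin d → Finset ℕ) : ℕ :=
  Finset.univ.sup fun i => Multiset.card (partitionOf (S i))

/-- `Y` is the balanced quotient `Q(S)` of `S`: each `Y i` is the (unique) β-set of
cardinality `r` with `p(Y i) = p(S i)`, where `r` is the maximal number of parts
among the `p(S i)`. -/
def IsBalancedQuotient {d : ℕ} (S Y : Fin d → Finset ℕ) : Prop :=
  ∀ i, (Y i).card = quotCard S ∧ partitionOf (Y i) = partitionOf (S i)

/-- The core `C(S) = ([x_0],…,[x_{d−1}])` of a `d`-symbol, `x_i = |X_i|`. -/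
def coreSymbol {d : ℕ} (S : Fin d → Finset ℕ) : Fin d → Finset ℕ :=
  fun i => Finset.range (S i).card

/-- The `δ`-length `k(a−b) + c_i − c_j` of a hook `(a,b,i,j)`, for the
`d`-hook data tuple `δ = (c_0,…,c_{d−1};k)`. -/
noncomputable def hookLen {d : ℕ} (c : Fin d → ℝ) (k : ℝ)
    (z : ℕ × ℕ × Fin d × Fin d) : ℝ :=
  k * ((z.1 - z.2.1 : ℕ) : ℝ) + c z.2.2.1 - c z.2.2.2

/-- The multiset `𝓗^δ(S)` of `δ`-lengths of all hooks of `S`. -/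
noncomputable def hookLens {d : ℕ} (c : Fin d → ℝ) (k : ℝ)
    (S : Fin d → Finset ℕ) : Multiset ℝ :=
  (symbolHooks S).val.map (hookLen c k)

/-- `H_{ij}^ℓ(S)`, the set of hooks `(a,b,i,j)` of `S` with `a − b = ℓ`. -/
def Hij {d : ℕ} (S : Fin d → Finset ℕ) (i j : Fin d) (ℓ : ℕ) :
    Finset (ℕ × ℕ × Fin d × Fin d) :=
  (symbolHooks S).filter fun z => z.2.2.1 = i ∧ z.2.2.2 = j ∧ z.1 - z.2.1 = ℓ

/-- The sign-modified length `h̄^{δ_S}` (on hooks of the balanced quotient), where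
`x` records the cardinalities `x_i = |X_i|` of `S`, and `δ_S = (c_i + x_i k; k)`.
For a hook `z = (a,b,u,v)` with `ℓ = a − b`: relabelling so that `Δ = x_i − x_j ≥ 0`,
the sign is `+` if `z` lies in position `(i,j)`, or in position `(j,i)` with `ℓ > Δ`,
or in position `(j,i)` with `ℓ = Δ` and `i < j`; otherwise the sign is `−`. -/
noncomputable def signedLen {d : ℕ} (x : Fin d → ℕ) (c : Fin d → ℝ) (k : ℝ)
    (z : ℕ × ℕ × Fin d × Fin d) : ℝ :=
  if x z.2.2.2 ≤ x z.2.2.1 then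
    k * ((z.1 - z.2.1 : ℕ) : ℝ) + (c z.2.2.1 + (x z.2.2.1 : ℝ) * k)
      - (c z.2.2.2 + (x z.2.2.2 : ℝ) * k)
  else if x z.2.2.2 - x z.2.2.1 < z.1 - z.2.1 ∨
      (z.1 - z.2.1 = x z.2.2.2 - x z.2.2.1 ∧ (z.2.2.2 : ℕ) < (z.2.2.1 : ℕ)) then
    k * ((z.1 - z.2.1 : ℕ) : ℝ) + (c z.2.2.1 + (x z.2.2.1 : ℝ) * k)
      - (c z.2.2.2 + (x z.2.2.2 : ℝ) * k)
  else
    -(k * ((z.1 - z.2.1 : ℕ) : ℝ) + (c z.2.2.1 + (x z.2.2.1 : ℝ) * k)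
      - (c z.2.2.2 + (x z.2.2.2 : ℝ) * k))

/-- The permutation `σ_{d,ℓ,e}` of `ℕ`:
`σ(r(dℓ) + sd + t) = r(dℓ) + sd + ((t + re) mod d)`. -/
def twistFun (d ℓ e : ℕ) (n : ℕ) : ℕ :=
  d * ℓ * (n / (d * ℓ)) + d * (n % (d * ℓ) / d) + (n % d + n / (d * ℓ) * e) % d

/-!
For `ℓ > 0`, `H_{ij}^ℓ(S)` is in bijection with the `a ∈ X_i` such that `ℓ ≤ a` and `a - ℓ ∉ X_j`.
Padding `X ↦ X^{+s}` preserves partitions, and padding both sets by the same `s` preserves these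
counts. A β-set is determined by its partition and its size, so `X_i^{+r} = Y_i^{+x_i}` and
`X_j^{+(r+Δ)} = Y_j^{+x_i}`. Put `m = Δ - ℓ`. In `B = X_i^{+r}` and `A = X_j^{+(r+Δ)}`, which have
the same size, the hooks of length `ℓ` from `X_i` to `X_j` become the `b ∈ B` with `b + m ∉ A`;
double counting the pairs `b ∈ B`, `b + m ∈ A` shows that there are `m` more of these than hooks of
length `m` from `A` to `B`, i.e. from `Y_j` to `Y_i`. Finally, the core has exactly `m` hooks of
length `ℓ` from `i` to `j`.
-/

open Finset

lemma mem_shiftUp {X : Finset ℕ} {s a : ℕ} :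
    a ∈ shiftUp X s ↔ a < s ∨ s ≤ a ∧ a - s ∈ X := by
  simp only [shiftUp, mem_union, mem_image, mem_range]
  constructor
  · rintro (⟨b, hb, rfl⟩ | h)
    · simpa
    · exact .inl h
  · rintro (h | ⟨h, hX⟩)
    · exact .inr h
    · exact .inl ⟨a - s, hX, by omega⟩

lemma disjoint_image_add_range (X : Finset ℕ) (s : ℕ) :
    Disjoint (X.image (· + s)) (range s) := by
  simp only [disjoint_left, mem_image, mem_range]
  rintro a ⟨b, _, rfl⟩
  omega

lemma card_shiftUp (X : Finset ℕ) (s : ℕ) : #(shiftUp X s) = #X + s := by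
  rw [shiftUp, card_union_of_disjoint (disjoint_image_add_range X s),
    card_image_of_injective _ (add_left_injective s), card_range]

lemma card_filter_shiftUp (X : Finset ℕ) (s : ℕ) (p : ℕ → Prop) [DecidablePred p] :
    #{a ∈ shiftUp X s | p a} = #{a ∈ X | p (a + s)} + #{a ∈ range s | p a} := by
  rw [shiftUp, filter_union, card_union_of_disjoint
    (disjoint_filter_filter (disjoint_image_add_range X s)), filter_image,
    card_image_of_injective _ (add_left_injective s)]

def betaPart (X : Finset ℕ) (a : ℕ) : ℕ := a - #{b ∈ X | b < a}

def betaParts (X : Finset ℕ) : Multiset ℕ := X.val.map (betaPart X)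

lemma card_betaParts (X : Finset ℕ) : Multiset.card (betaParts X) = #X :=
  Multiset.card_map _ _

lemma betaPart_add_card_filter_lt (X : Finset ℕ) (a : ℕ) :
    betaPart X a + #{b ∈ X | b < a} = a := by
  have : #{b ∈ X | b < a} ≤ a :=
    (card_le_card fun b hb => mem_range.2 (mem_filter.1 hb).2).trans (card_range a).le
  rw [betaPart]
  omega

lemma betaPart_mono (X : Finset ℕ) : Monotone (betaPart X) := by
  intro a b hab
  have hsub : {c ∈ X | c < b} ⊆ {c ∈ X | c < a} ∪ Ico a b := by
    intro c hc
    simp only [mem_filter, mem_union, mem_Ico] at hc ⊢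
    by_cases hca : c < a
    exacts [.inl ⟨hc.1, hca⟩, .inr ⟨not_lt.1 hca, hc.2⟩]
  have := (card_le_card hsub).trans (card_union_le _ _)
  rw [Nat.card_Ico] at this
  have := betaPart_add_card_filter_lt X a
  have := betaPart_add_card_filter_lt X b
  omega

lemma filter_lt_max' (A : Finset ℕ) (h : A.Nonempty) :
    {b ∈ A | b < A.max' h} = A.erase (A.max' h) := by
  ext b
  simp only [mem_filter, mem_erase]
  exact ⟨fun ⟨hb, hlt⟩ => ⟨hlt.ne, hb⟩, fun ⟨hne, hb⟩ => ⟨hb, (A.le_max' b hb).lt_of_ne hne⟩⟩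

lemma betaParts_eq_cons (A : Finset ℕ) (h : A.Nonempty) :
    betaParts A = betaPart A (A.max' h) ::ₘ betaParts (A.erase (A.max' h)) := by
  have hval : A.val = A.max' h ::ₘ (A.erase (A.max' h)).val := by
    rw [erase_val, Multiset.cons_erase (A.max'_mem h)]
  rw [betaParts, hval, Multiset.map_cons, betaParts]
  congr 1
  refine Multiset.map_congr rfl fun x hx => ?_
  rw [mem_val, mem_erase] at hx
  have hxa : x < A.max' h := (A.le_max' x hx.2).lt_of_ne hx.1
  rw [betaPart, betaPart, filter_erase, erase_eq_of_notMem]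
  simp only [mem_filter, not_and, not_lt]
  exact fun _ => hxa.le

lemma sup_betaParts (A : Finset ℕ) (h : A.Nonempty) :
    (betaParts A).sup = betaPart A (A.max' h) := by
  refine le_antisymm (Multiset.sup_le.2 fun p hp => ?_) ?_
  · obtain ⟨x, hx, rfl⟩ := Multiset.mem_map.1 hp
    exact betaPart_mono A (A.le_max' x hx)
  · exact Multiset.le_sup (Multiset.mem_map_of_mem _ (A.max'_mem h))

lemma betaParts_injective : Function.Injective betaParts := by
  suffices ∀ n (A B : Finset ℕ), #A = n → betaParts A = betaParts B → A = B from
    fun A B hAB => this _ A B rfl hAB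
  intro n
  induction n with
  | zero =>
    intro A B hA hAB
    have hB : #B = 0 := by rw [← card_betaParts, ← hAB, card_betaParts, hA]
    rw [card_eq_zero.1 hA, card_eq_zero.1 hB]
  | succ n ih =>
    intro A B hA hAB
    have hB : #B = n + 1 := by rw [← card_betaParts, ← hAB, card_betaParts, hA]
    have hAne : A.Nonempty := card_pos.1 (by omega)
    have hBne : B.Nonempty := card_pos.1 (by omega)
    have hpart : betaPart A (A.max' hAne) = betaPart B (B.max' hBne) := by
      rw [← sup_betaParts, ← sup_betaParts, hAB]
    -- the largest element of a β-set of size `n + 1` is its largest part plus `n`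
    have hmax : A.max' hAne = B.max' hBne := by
      have hA' := betaPart_add_card_filter_lt A (A.max' hAne)
      have hB' := betaPart_add_card_filter_lt B (B.max' hBne)
      rw [filter_lt_max', card_erase_of_mem (A.max'_mem hAne)] at hA'
      rw [filter_lt_max', card_erase_of_mem (B.max'_mem hBne)] at hB'
      omega
    have herase : A.erase (A.max' hAne) = B.erase (B.max' hBne) := by
      refine ih _ _ (by rw [card_erase_of_mem (A.max'_mem hAne), hA]; rfl) ?_
      rw [betaParts_eq_cons A hAne, betaParts_eq_cons B hBne, hpart] at hAB
      exact (Multiset.cons_inj_right _).1 hAB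
    rw [← insert_erase (A.max'_mem hAne), ← insert_erase (B.max'_mem hBne), herase, hmax]

lemma betaParts_eq_partitionOf_add_replicate (X : Finset ℕ) :
    betaParts X = partitionOf X + Multiset.replicate (#X - Multiset.card (partitionOf X)) 0 := by
  have hsplit : partitionOf X + (betaParts X).filter (fun p => ¬p ≠ 0) = betaParts X :=
    Multiset.filter_add_not _ _
  have hcard := congrArg Multiset.card hsplit
  rw [Multiset.card_add, card_betaParts] at hcard
  conv_lhs => rw [← hsplit]
  congr 1
  exact Multiset.eq_replicate.2 ⟨by omega, fun b hb => of_not_not (Multiset.mem_filter.1 hb).2⟩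

lemma betaPart_shiftUp_add (X : Finset ℕ) (s a : ℕ) :
    betaPart (shiftUp X s) (a + s) = betaPart X a := by
  have hlow : {b ∈ range s | b < a + s} = range s :=
    filter_true_of_mem fun b hb => by rw [mem_range] at hb; omega
  rw [betaPart, card_filter_shiftUp, hlow, card_range, betaPart]
  simp only [add_lt_add_iff_right]
  omega

lemma betaPart_shiftUp_of_lt (X : Finset ℕ) {s a : ℕ} (ha : a < s) :
    betaPart (shiftUp X s) a = 0 := by
  have hsub : range a ⊆ {b ∈ shiftUp X s | b < a} := fun b hb => by
    rw [mem_range] at hb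
    rw [mem_filter, mem_shiftUp]
    exact ⟨.inl (by omega), hb⟩
  have := card_le_card hsub
  rw [card_range] at this
  rw [betaPart]
  omega

lemma betaParts_shiftUp (X : Finset ℕ) (s : ℕ) :
    betaParts (shiftUp X s) = betaParts X + Multiset.replicate s 0 := by
  have hval : (shiftUp X s).val = X.val.map (· + s) + (range s).val := by
    rw [shiftUp, ← disjUnion_eq_union _ _ (disjoint_image_add_range X s), disjUnion_val,
      image_val_of_injOn (add_left_injective s).injOn]
  rw [betaParts, hval, Multiset.map_add, Multiset.map_map, betaParts]
  congr 1
  · exact Multiset.map_congr rfl fun a _ => betaPart_shiftUp_add X s a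
  · rw [Multiset.map_congr rfl (g := fun _ => 0) fun a ha =>
      betaPart_shiftUp_of_lt X (by simpa using ha), Multiset.map_const', card_val,
      card_range]

lemma shiftUp_eq_shiftUp_of_partitionOf_eq {X Y : Finset ℕ} {s t : ℕ}
    (hcard : #X + s = #Y + t) (hpart : partitionOf X = partitionOf Y) :
    shiftUp X s = shiftUp Y t := by
  have hle (Z : Finset ℕ) : Multiset.card (partitionOf Z) ≤ #Z :=
    card_betaParts Z ▸ Multiset.card_le_card (Multiset.filter_le _ _)
  apply betaParts_injective
  rw [betaParts_shiftUp, betaParts_shiftUp, betaParts_eq_partitionOf_add_replicate,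
    betaParts_eq_partitionOf_add_replicate Y, hpart, add_assoc, add_assoc,
    ← Multiset.replicate_add, ← Multiset.replicate_add]
  have hX := hle X
  have hY := hle Y
  rw [hpart] at hX
  congr 2
  omega

def hookCount (A B : Finset ℕ) (ℓ : ℕ) : ℕ := #{a ∈ A | ℓ ≤ a ∧ a - ℓ ∉ B}

lemma card_Hij_eq_hookCount {d : ℕ} (S : Fin d → Finset ℕ) (i j : Fin d) {ℓ : ℕ}
    (hℓ : 0 < ℓ) : #(Hij S i j ℓ) = hookCount (S i) (S j) ℓ := by
  refine card_nbij' (fun z => z.1) (fun a => (a, a - ℓ, i, j)) ?_ ?_ ?_ ?_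
  · rintro ⟨a, b, u, v⟩ hz
    simp only [mem_coe, Hij, symbolHooks, mem_filter] at hz
    simp only [mem_coe, mem_filter]
    obtain ⟨⟨-, ha, hb, hab⟩, rfl, rfl, rfl⟩ := hz
    rw [show a - (a - b) = b by omega]
    exact ⟨ha, by omega, hb⟩
  · intro a ha
    simp only [mem_coe, mem_filter] at ha
    simp only [mem_coe, Hij, symbolHooks, mem_filter, mem_product, mem_range, mem_univ]
    have hsup : a ≤ univ.sup fun i => (S i).sup id :=
      (le_sup (f := id) ha.1).trans (le_sup (f := fun i => (S i).sup id) (mem_univ i))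
    exact ⟨⟨⟨by omega, by omega, trivial, trivial⟩, ha.1, ha.2.2, .inl (by omega)⟩,
      trivial, trivial, by omega⟩
  · rintro ⟨a, b, u, v⟩ hz
    simp only [mem_coe, Hij, symbolHooks, mem_filter] at hz
    obtain ⟨⟨-, -, -, hab⟩, rfl, rfl, rfl⟩ := hz
    simp only [Prod.mk.injEq, and_true, true_and]
    omega
  · intro a _
    rfl

lemma hookCount_range_range (x y ℓ : ℕ) : hookCount (range x) (range y) ℓ = x - y - ℓ := by
  rw [hookCount, show {a ∈ range x | ℓ ≤ a ∧ a - ℓ ∉ range y} = Ico (y + ℓ) x by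
    ext a; simp only [mem_filter, mem_range, mem_Ico]; omega, Nat.card_Ico]
  omega

lemma hookCount_shiftUp (X Z : Finset ℕ) (s : ℕ) {ℓ : ℕ} (hℓ : 0 < ℓ) :
    hookCount (shiftUp X s) (shiftUp Z s) ℓ = hookCount X Z ℓ := by
  have hlow : {a ∈ range s | ℓ ≤ a ∧ a - ℓ ∉ shiftUp Z s} = ∅ := by
    refine filter_false_of_mem fun a ha => ?_
    simp only [mem_range, mem_shiftUp] at ha ⊢
    omega
  rw [hookCount, card_filter_shiftUp, hlow, card_empty, add_zero, hookCount]
  congr 1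
  refine filter_congr fun a _ => ?_
  rcases lt_or_ge a ℓ with h | h
  · simp only [mem_shiftUp, not_le.mpr h, false_and, iff_false]
    rintro ⟨_, hs⟩
    exact hs (.inl (by omega))
  · simp [mem_shiftUp, h, show ℓ ≤ a + s by omega, show s ≤ a + s - ℓ by omega,
      show a + s - ℓ - s = a - ℓ by omega]

lemma hookCount_add_card (A B : Finset ℕ) (m : ℕ) :
    hookCount A B m + #B = #{b ∈ B | b + m ∉ A} + #{a ∈ A | m ≤ a} := by
  have hA : #{a ∈ A | m ≤ a} = hookCount A B m + #{a ∈ A | m ≤ a ∧ a - m ∈ B} := by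
    rw [← card_filter_add_card_filter_not (s := {a ∈ A | m ≤ a}) (fun a => a - m ∉ B),
      filter_filter, filter_filter, hookCount]
    simp only [not_not]
  have hB : #B = #{b ∈ B | b + m ∉ A} + #{b ∈ B | b + m ∈ A} := by
    rw [add_comm, card_filter_add_card_filter_not]
  have hmatch : {a ∈ A | m ≤ a ∧ a - m ∈ B} = {b ∈ B | b + m ∈ A}.image (· + m) := by
    ext a
    simp only [mem_filter, mem_image]
    constructor
    · rintro ⟨ha, hma, hb⟩
      exact ⟨a - m, ⟨hb, by rwa [Nat.sub_add_cancel hma]⟩, Nat.sub_add_cancel hma⟩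
    · rintro ⟨b, ⟨hb, hbm⟩, rfl⟩
      exact ⟨hbm, by omega, by simpa⟩
  rw [hA, hB, hmatch, card_image_of_injective _ (add_left_injective m)]
  ring

lemma card_filter_le_shiftUp_add (X : Finset ℕ) {m t : ℕ} (hmt : m ≤ t) :
    #{a ∈ shiftUp X t | m ≤ a} + m = #X + t := by
  have hlow : {a ∈ range t | m ≤ a} = Ico m t := by
    ext a
    simp only [mem_filter, mem_range, mem_Ico]
    omega
  rw [card_filter_shiftUp, filter_true_of_mem fun a _ => by omega, hlow, Nat.card_Ico]
  omega

lemma card_filter_add_notMem_shiftUp (X Z : Finset ℕ) (s ℓ m : ℕ) :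
    #{b ∈ shiftUp X s | b + m ∉ shiftUp Z (s + ℓ + m)} = hookCount X Z ℓ := by
  have hlow : {b ∈ range s | b + m ∉ shiftUp Z (s + ℓ + m)} = ∅ := by
    refine filter_false_of_mem fun b hb => ?_
    simp only [mem_range, mem_shiftUp] at hb ⊢
    omega
  rw [card_filter_shiftUp, hlow, card_empty, add_zero, hookCount]
  congr 1
  refine filter_congr fun a _ => ?_
  rcases lt_or_ge a ℓ with h | h
  · simp [mem_shiftUp, not_le.mpr h, show ¬ s + ℓ ≤ a + s by omega]
  · simp [mem_shiftUp, h, show s + ℓ ≤ a + s by omega,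
      show a + s + m - (s + ℓ + m) = a - ℓ by omega]

lemma hookCount_shiftUp_swap (X Z : Finset ℕ) (s ℓ m : ℕ) (hcard : #X = #Z + ℓ + m) :
    hookCount (shiftUp Z (s + ℓ + m)) (shiftUp X s) m + m = hookCount X Z ℓ := by
  have hcount := hookCount_add_card (shiftUp Z (s + ℓ + m)) (shiftUp X s) m
  have hlarge := card_filter_le_shiftUp_add Z (show m ≤ s + ℓ + m by omega)
  rw [card_filter_add_notMem_shiftUp, card_shiftUp] at hcount
  omega

theorem card_Hij_of_lt_delta_general (d : ℕ) (S Y : Fin d → Finset ℕ)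
    (hY : IsBalancedQuotient S Y) (i j : Fin d) (ℓ : ℕ) (hℓ0 : 0 < ℓ)
    (hℓ : ℓ < (S i).card - (S j).card) :
    (Hij S i j ℓ).card =
      (Hij Y j i (((S i).card - (S j).card) - ℓ)).card +
        (Hij (coreSymbol S) i j ℓ).card := by
  set Δ := #(S i) - #(S j)
  obtain ⟨hYi, hpi⟩ := hY i
  obtain ⟨hYj, hpj⟩ := hY j
  have hi : shiftUp (S i) (quotCard S) = shiftUp (Y i) #(S i) :=
    shiftUp_eq_shiftUp_of_partitionOf_eq (by omega) hpi.symm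
  have hj : shiftUp (S j) (quotCard S + ℓ + (Δ - ℓ)) = shiftUp (Y j) #(S i) :=
    shiftUp_eq_shiftUp_of_partitionOf_eq (by omega) hpj.symm
  have hcore : hookCount (coreSymbol S i) (coreSymbol S j) ℓ = Δ - ℓ :=
    hookCount_range_range _ _ _
  rw [card_Hij_eq_hookCount S i j hℓ0, card_Hij_eq_hookCount Y j i (by omega : 0 < Δ - ℓ),
    card_Hij_eq_hookCount _ i j hℓ0, hcore,
    ← hookCount_shiftUp_swap (S i) (S j) (quotCard S) ℓ (Δ - ℓ) (by omega), hi, hj,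
    hookCount_shiftUp _ _ _ (by omega)]

/-- For `i ≠ j` with `Δ = |X_i| − |X_j| > 0` and all `0 < ℓ < Δ`:
`|H_{ij}^ℓ(S)| = |H_{ji}^{Δ−ℓ}(Q)| + |H_{ij}^ℓ(C)|`. -/
theorem card_Hij_of_lt_delta (d : ℕ) (hd : 0 < d) (S Y : Fin d → Finset ℕ)
    (hY : IsBalancedQuotient S Y) (i j : Fin d) (hij : i ≠ j)
    (hΔ : (S j).card < (S i).card) (ℓ : ℕ) (hℓ0 : 0 < ℓ)
    (hℓ : ℓ < (S i).card - (S j).card) :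
    (Hij S i j ℓ).card =
      (Hij Y j i (((S i).card - (S j).card) - ℓ)).card +
        (Hij (coreSymbol S) i j ℓ).card :=
  card_Hij_of_lt_delta_general d S Y hY i j ℓ hℓ0 hℓ
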